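/- Suppose w ∈ F_r with sql(w) = g < ∞ and χ₂(w) = 1 - g, and suppose the subgroup J = ⟨u₁,...,u_g⟩ generated by witnesses to w = u₁²⋯u_g² is a free factor of F_r. Then r ≥ g, the elements u₁,...,u_g form part of a basis of F_r, and there is an automorphism θ of F_r with θ(w) = x₁²⋯x_g². -/

import Mathlib

/-!
Since `w` is a product of squares of elements of `J = ⟨u₁, …, u_g⟩`, it lies in `K₂(J)`,
so `χ₂(w) = 1 - g` forces `rank J ≥ g`. As `J` is generated by the `g` elements `uᵢ`,
counting homomorphisms to `ℤ/2` shows that a free basis `S` of `J` has exactly `g` elements.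
Complete `S` to a basis `B` of `F_r`; the endomorphism of `F_r` sending `x₁, …, x_g` to
`u₁, …, u_g` and the remaining generators onto `B \ S` is onto, since its image contains
`J ⊇ S`. Finitely generated residually finite groups are Hopfian (Malcev), so it is an
automorphism `Λ`; the images of the generators form a basis containing the `uᵢ`, and
`θ = Λ⁻¹` carries `w` to `x₁² ⋯ x_g²`.
-/

/-- `K_m(H)` for a subgroup `H` of a (free) group `F`, viewed as a subgroup of `F`.
Here `m = 0` encodes `m = ∞`. It is the subgroup generated by all commutators of
elements of `H` together with all `m`-th powers of elements of `H`; for free `H` this is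
exactly the kernel of the map `H → (ℤ/mℤ)^{rank H}` sending a basis to the standard
generators (and `K_0(H) = [H,H]`). -/
def Kset {F : Type*} [Group F] (m : ℕ) (H : Subgroup F) : Subgroup F :=
  Subgroup.closure
    ({x | ∃ a ∈ H, ∃ b ∈ H, x = a * b * a⁻¹ * b⁻¹} ∪ {x | ∃ u ∈ H, x = u ^ m})

/-- The rank of a subgroup `H`: the minimal cardinality of a finite generating set
(`⊤` if `H` is not finitely generated). For subgroups of free groups this is the rank
of `H` as a free group. -/
noncomputable def grk {F : Type*} [Group F] (H : Subgroup F) : ℕ∞ :=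
  sInf ((fun S : Finset F => (S.card : ℕ∞)) '' {S | Subgroup.closure (S : Set F) = H})

/-- `minrk r m w = min { rank H : H ≤ F_r, w ∈ K_m(H) }` (`⊤` if no such `H` exists).
In the paper's notation, `χ_m(w) = 1 - minrk r m w`. Here `m = 0` encodes `m = ∞`. -/
noncomputable def minrk (r m : ℕ) (w : FreeGroup (Fin r)) : ℕ∞ :=
  sInf (grk '' {H : Subgroup (FreeGroup (Fin r)) | w ∈ Kset m H})

open scoped commutatorElement

/-- The commutator length of `w`: the minimal `g` such that `w` is a product of `g`
commutators (`⊤` if `w` is not in the commutator subgroup). -/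
noncomputable def clw {F : Type*} [Group F] (w : F) : ℕ∞ :=
  sInf {n : ℕ∞ | ∃ g : ℕ, (g : ℕ∞) = n ∧ ∃ u v : Fin g → F,
    w = (List.ofFn fun i => ⁅u i, v i⁆).prod}

/-- The square length of `w`: the minimal `g` such that `w = u₁²⋯u_g²`
(`⊤` if `w` is not a product of squares). -/
noncomputable def sqlw {F : Type*} [Group F] (w : F) : ℕ∞ :=
  sInf {n : ℕ∞ | ∃ g : ℕ, (g : ℕ∞) = n ∧ ∃ u : Fin g → F,
    w = (List.ofFn fun i => (u i) ^ 2).prod}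

/-- `S` is a free basis of the subgroup `H ≤ F`: the canonical map `FreeGroup S → F`
induced by inclusion is injective (so `S` satisfies no nontrivial relation) and its
range is `H` (so `S` generates `H`). -/
def IsFreeBasis {F : Type*} [Group F] (S : Set F) (H : Subgroup F) : Prop :=
  Function.Injective (FreeGroup.lift (Subtype.val : S → F)) ∧
    MonoidHom.range (FreeGroup.lift (Subtype.val : S → F)) = H

/-- `A` is a free factor of `J` (written `A ≤* J`): some free basis of `A` extends to a
free basis of `J`. -/
def IsFreeFactor {F : Type*} [Group F] (A J : Subgroup F) : Prop :=
  ∃ S T : Set F, IsFreeBasis S A ∧ IsFreeBasis (S ∪ T) J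

open Function

theorem Set.exists_perm_eq_mul {G : Type*} [Group G] (P : Set G) [Finite P] (a : G) :
    ∃ σ : Equiv.Perm P, ∀ p : P, a * p ∈ P → (σ p : G) = a * p := by
  classical
  let e : {p : P // a * p ∈ P} ≃ {q : P // a⁻¹ * q ∈ P} :=
    { toFun := fun p => ⟨⟨a * p, p.2⟩, by simp⟩
      invFun := fun q => ⟨⟨a⁻¹ * q, q.2⟩, by simp⟩
      left_inv := fun p => by simp
      right_inv := fun q => by simp }
  exact ⟨e.extendSubtype, fun p hp => by rw [e.extendSubtype_apply_of_mem p hp]; rfl⟩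

theorem Group.finite_monoidHom {G Q : Type*} [Group G] [Group Q] [Group.FG G] [Finite Q] :
    Finite (G →* Q) := by
  obtain ⟨S, hS, hSfin⟩ := Group.fg_iff.mp ‹Group.FG G›
  have : Finite S := hSfin
  refine Finite.of_injective (fun χ : G →* Q => fun s : S => χ s) fun χ χ' h => ?_
  exact MonoidHom.eq_of_eqOn_dense hS fun s hs => congrFun h ⟨s, hs⟩

/-- Malcev: precomposition with `φ` is injective, hence bijective, on the finite set of
homomorphisms to a finite quotient, so each of them factors through `φ` and kills `ker φ`. -/
theorem MonoidHom.injective_of_surjective_of_residuallyFinite {G : Type*} [Group G]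
    [Group.FG G] [Group.ResiduallyFinite G] {φ : G →* G} (hφ : Surjective φ) : Injective φ := by
  refine (injective_iff_map_eq_one φ).mpr fun k hk => ?_
  by_contra hk1
  obtain ⟨H, hkH⟩ := Group.exists_finiteIndexNormalSubgroup_notMem k hk1
  let π := QuotientGroup.mk' H.toSubgroup
  have : Finite (G ⧸ H.toSubgroup) := Subgroup.finite_quotient_of_finiteIndex
  have := Group.finite_monoidHom (G := G) (Q := G ⧸ H.toSubgroup)
  have hcomp : Injective fun χ : G →* G ⧸ H.toSubgroup => χ.comp φ :=
    fun χ χ' h => (MonoidHom.cancel_right hφ).mp h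
  obtain ⟨χ, hχ⟩ := (Finite.injective_iff_surjective.mp hcomp) π
  have hπk : π k = 1 := by rw [← hχ]; simp [hk]
  exact hkH ((QuotientGroup.eq_one_iff k).mp hπk)

namespace FreeGroup

variable {α : Type*}

theorem mk_cons_true (x : α) (M : List (α × Bool)) : mk ((x, true) :: M) = of x * mk M := by
  rw [of, mul_mk]; rfl

theorem mk_cons_false (x : α) (M : List (α × Bool)) :
    mk ((x, false) :: M) = (of x)⁻¹ * mk M := by
  rw [of, inv_mk, mul_mk]; simp [invRev]

/-- `k ≠ 1` acts nontrivially on the finite set of elements spelled by the suffixes of a word for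
`k`, each generator acting by left multiplication wherever this stays inside the set. -/
instance : Group.ResiduallyFinite (FreeGroup α) := by
  classical
  refine Group.residuallyFinite_of_forall_exists_finite_monoidHom fun k hk => ?_
  let P : Set (FreeGroup α) := {p | ∃ M ∈ k.toWord.tails, mk M = p}
  have : Finite P := Set.Finite.subset (k.toWord.tails.map mk).finite_toSet
    (by rintro _ ⟨M, hM, rfl⟩; exact List.mem_map_of_mem hM)
  have mem_P : ∀ M, M <:+ k.toWord → mk M ∈ P :=
    fun M hM => ⟨M, (List.mem_tails _ _).mpr hM, rfl⟩
  choose σ hσ using fun x : α => P.exists_perm_eq_mul (of x)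
  let one : P := ⟨1, mem_P [] List.nil_suffix⟩
  have lift_mk_apply_one : ∀ M, M <:+ k.toWord → (lift σ (mk M) one : FreeGroup α) = mk M := by
    intro M
    induction M with
    | nil => intro _; rfl
    | cons a M ih =>
      intro haM
      have hM := (List.suffix_cons a M).trans haM
      obtain ⟨x, _ | _⟩ := a
      · have hxM := mem_P _ haM
        rw [mk_cons_false] at hxM ⊢
        let q : P := ⟨(of x)⁻¹ * mk M, hxM⟩
        have hq : σ x q = lift σ (mk M) one :=
          Subtype.ext (by rw [hσ x q (by simpa [q] using mem_P M hM), ih hM]; simp [q])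
        rw [_root_.map_mul, _root_.map_inv, lift_apply_of, Equiv.Perm.mul_apply, ← hq,
          Equiv.Perm.inv_def, Equiv.symm_apply_apply]
      · have hxM := mem_P _ haM
        rw [mk_cons_true] at hxM ⊢
        rw [_root_.map_mul, lift_apply_of, Equiv.Perm.mul_apply, hσ x _ (by rwa [ih hM]), ih hM]
  refine ⟨Equiv.Perm P, inferInstance, inferInstance, lift σ, fun h => hk ?_⟩
  simpa [mk_toWord, h, one] using (lift_mk_apply_one k.toWord List.suffix_rfl).symm

theorem finite_and_card_le_of_closure_range_eq_top {β ι : Type*} [Finite ι]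
    {v : ι → FreeGroup β} (hv : Subgroup.closure (Set.range v) = ⊤) :
    Finite β ∧ Nat.card β ≤ Nat.card ι := by
  let Z := Multiplicative (ZMod 2)
  have hres : Injective fun (f : β → Z) (i : ι) => lift f (v i) := fun f f' h =>
    lift.injective (MonoidHom.eq_of_eqOn_dense hv (by rintro _ ⟨i, rfl⟩; exact congrFun h i))
  have : Finite (β → Z) := Finite.of_injective _ hres
  have : Finite β := by
    by_contra hβ
    have := not_finite_iff_infinite.mp hβ
    exact not_finite (β → Z)
  refine ⟨this, ?_⟩
  have h := Nat.card_le_card_of_injective _ hres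
  rw [Nat.card_fun, Nat.card_fun] at h
  exact (Nat.pow_le_pow_iff_right (by simp [Z])).mp h

end FreeGroup

namespace IsFreeBasis

variable {F : Type*} [Group F] {S : Set F} {H : Subgroup F}

theorem closure_eq (hS : IsFreeBasis S H) : Subgroup.closure S = H := by
  rw [← hS.2, FreeGroup.range_lift_eq_closure, Subtype.range_coe]

theorem finite_and_card_le {ι : Type*} [Finite ι] (hS : IsFreeBasis S H) {v : ι → F}
    (hv : Subgroup.closure (Set.range v) = H) : S.Finite ∧ Nat.card S ≤ Nat.card ι := by
  have hvS : ∀ i, v i ∈ (FreeGroup.lift (Subtype.val : S → F)).range := fun i =>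
    hS.2 ▸ hv ▸ Subgroup.subset_closure ⟨i, rfl⟩
  choose v' hv' using hvS
  refine FreeGroup.finite_and_card_le_of_closure_range_eq_top (v := v') ?_
  apply Subgroup.map_injective hS.1
  rw [MonoidHom.map_closure, ← Set.range_comp, show _ ∘ v' = v from funext hv',
    ← MonoidHom.range_eq_map, hS.2, hv]

noncomputable def equivOfTop {α : Type*} {S : Set (FreeGroup α)} (hS : IsFreeBasis S ⊤) :
    S ≃ α :=
  .ofFreeGroupEquiv (.ofBijective _ ⟨hS.1, MonoidHom.range_eq_top.mp hS.2⟩)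

end IsFreeBasis

theorem MulEquiv.isFreeBasis_range_comp_of {α G : Type*} [Group G] (e : FreeGroup α ≃* G) :
    IsFreeBasis (Set.range (e ∘ FreeGroup.of)) ⊤ := by
  let q := Equiv.ofInjective _ (e.injective.comp FreeGroup.of_injective)
  have hlift : FreeGroup.lift (Subtype.val : Set.range (e ∘ FreeGroup.of) → G) =
      (e : FreeGroup α →* G).comp (FreeGroup.freeGroupCongr q).symm.toMonoidHom := by
    ext a
    obtain ⟨x, rfl⟩ := q.surjective a
    simp [FreeGroup.freeGroupCongr_symm]
    rfl
  unfold IsFreeBasis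
  rw [hlift]
  exact ⟨e.injective.comp (FreeGroup.freeGroupCongr q).symm.injective,
    MonoidHom.range_eq_top.mpr (e.surjective.comp (FreeGroup.freeGroupCongr q).symm.surjective)⟩

theorem pow_mem_Kset {F : Type*} [Group F] {H : Subgroup F} {u : F} (hu : u ∈ H) (m : ℕ) :
    u ^ m ∈ Kset m H :=
  Subgroup.subset_closure (Or.inr ⟨u, hu, rfl⟩)

theorem minrk_le_grk {r m : ℕ} {w : FreeGroup (Fin r)} {H : Subgroup (FreeGroup (Fin r))}
    (hw : w ∈ Kset m H) : minrk r m w ≤ grk H :=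
  sInf_le ⟨H, hw, rfl⟩

theorem grk_le_card {F : Type*} [Group F] {S : Set F} {H : Subgroup F} (hS : S.Finite)
    (hSH : Subgroup.closure S = H) : grk H ≤ Nat.card S :=
  sInf_le ⟨hS.toFinset, by simpa using hSH, by simp [Nat.card_eq_card_finite_toFinset hS]⟩

theorem exists_mulEquiv_of_basis_subset_closure {r g : ℕ}
    {B S : Set (FreeGroup (Fin r))} (hB : IsFreeBasis B ⊤) (hSB : S ⊆ B) (hS : Nat.card S = g)
    {u : Fin g → FreeGroup (Fin r)} (hSu : S ⊆ Subgroup.closure (Set.range u)) :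
    ∃ hgr : g ≤ r, ∃ Λ : FreeGroup (Fin r) ≃* FreeGroup (Fin r),
      ∀ i, Λ (FreeGroup.of (Fin.castLE hgr i)) = u i := by
  have eB := hB.equivOfTop
  have : Finite B := .of_equiv _ eB.symm
  have hgr : g ≤ r := by
    have h := Set.ncard_le_ncard hSB
    rwa [← Nat.card_coe_set_eq, ← Nat.card_coe_set_eq, Nat.card_congr eB, Nat.card_fin, hS] at h
  refine ⟨hgr, ?_⟩
  have hD : Nat.card ↥(B \ S) = r - g := by
    rw [Nat.card_coe_set_eq, Set.ncard_sdiff hSB ((Set.toFinite B).subset hSB),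
      ← Nat.card_coe_set_eq, ← Nat.card_coe_set_eq, Nat.card_congr eB, Nat.card_fin, hS]
  let d : Fin (r - g) → FreeGroup (Fin r) := Subtype.val ∘ (Finite.equivFinOfCardEq hD).symm
  let Λ := FreeGroup.lift (Fin.append u d ∘ Fin.cast (Nat.add_sub_cancel' hgr).symm)
  have hΛu : ∀ i, Λ (FreeGroup.of (Fin.castLE hgr i)) = u i := fun i => by
    simp [Λ]
  have hΛd : ∀ j, Λ (FreeGroup.of (Fin.cast (Nat.add_sub_cancel' hgr) (Fin.natAdd g j))) = d j :=
    fun j => by simp [Λ]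
  have hΛ : Surjective Λ := by
    refine MonoidHom.range_eq_top.mp (eq_top_iff.mpr ?_)
    rw [← hB.closure_eq, Subgroup.closure_le]
    intro b hb
    by_cases hbS : b ∈ S
    · refine (Subgroup.closure_le _).mpr ?_ (hSu hbS)
      rintro _ ⟨i, rfl⟩
      exact ⟨_, hΛu i⟩
    · obtain ⟨j, hj⟩ := (Finite.equivFinOfCardEq hD).symm.surjective ⟨b, hb, hbS⟩
      exact ⟨_, (hΛd j).trans (congrArg Subtype.val hj)⟩
  exact ⟨.ofBijective Λ ⟨MonoidHom.injective_of_surjective_of_residuallyFinite hΛ, hΛ⟩, hΛu⟩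

/-- Suppose `w ∈ F_r` has square length `g`, witnessed by `w = u₁²⋯u_g²`, that
`χ₂(w) = 1 - g` (i.e. `minrk r 2 w = g`), and that `J = ⟨u₁,…,u_g⟩` is a free factor of
`F_r`. Then `r ≥ g`, the elements `u₁,…,u_g` are part of a basis of `F_r`, and some
automorphism of `F_r` carries `w` to the non-orientable surface word `x₁²⋯x_g²`. -/
theorem stmt19 (r g : ℕ) (w : FreeGroup (Fin r)) (u : Fin g → FreeGroup (Fin r))
    (hw : w = (List.ofFn fun i => (u i) ^ 2).prod)
    (hchi : minrk r 2 w = (g : ℕ∞))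
    (hJ : IsFreeFactor (Subgroup.closure (Set.range u))
      (⊤ : Subgroup (FreeGroup (Fin r)))) :
    ∃ h : g ≤ r,
      (∃ S : Set (FreeGroup (Fin r)),
          IsFreeBasis S (⊤ : Subgroup (FreeGroup (Fin r))) ∧ Set.range u ⊆ S) ∧
      ∃ θ : FreeGroup (Fin r) ≃* FreeGroup (Fin r),
        θ w = (List.ofFn fun i : Fin g =>
          (FreeGroup.of (⟨i.1, by have := i.isLt; omega⟩ : Fin r)) ^ 2).prod := by
  obtain ⟨S, T, hS, hB⟩ := hJ
  have hwK : w ∈ Kset 2 (Subgroup.closure (Set.range u)) := by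
    rw [hw]
    refine Subgroup.list_prod_mem _ fun x hx => ?_
    obtain ⟨i, rfl⟩ := List.mem_ofFn.mp hx
    exact pow_mem_Kset (Subgroup.subset_closure (Set.mem_range_self i)) 2
  obtain ⟨hSfin, hSg⟩ := hS.finite_and_card_le rfl
  have hgS : (g : ℕ∞) ≤ Nat.card S :=
    hchi ▸ (minrk_le_grk hwK).trans (grk_le_card hSfin hS.closure_eq)
  obtain ⟨hgr, Λ, hΛ⟩ := exists_mulEquiv_of_basis_subset_closure hB Set.subset_union_left
    (le_antisymm (by simpa using hSg) (by exact_mod_cast hgS))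
    (hS.closure_eq ▸ Subgroup.subset_closure)
  refine ⟨hgr, ⟨_, Λ.isFreeBasis_range_comp_of, ?_⟩, Λ.symm, ?_⟩
  · rintro _ ⟨i, rfl⟩
    exact ⟨_, hΛ i⟩
  · rw [MulEquiv.symm_apply_eq, map_list_prod, List.map_ofFn, hw]
    refine congrArg _ (congrArg List.ofFn (funext fun i => ?_))
    rw [comp_apply, map_pow, ← hΛ i]
    rfl
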